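/- arXiv:0810.1747 — 2 statements merged into one kernel-verified Lean document; each statement's English description precedes it below -/
import Mathlib

section
/- (Stokes-type identity) Let K be a field of characteristic zero, I a finite set with |I| ≥ 2, and x : I → K a vector with ∑_{i∈I} x_i = 0. Then for every polynomial f ∈ K[t_i : i ∈ I], ∫_I ∑_{i∈I} x_i (∂f/∂t_i) + ∑_{i∈I} x_i ∫_{I∖{i}} (f|_{t_i = 0}) = 0, where f|_{t_i=0} ∈ K[t_j : j ∈ I∖{i}] is the result of substituting t_i = 0 in f. -/
/-!
For a monomial `t^ν` and `i ∈ I` one has `∫_I ∂_i t^ν + ∫'_{I∖{i}} t^ν|_{t_i = 0} = ∫'_I t^ν`,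
where the primed integrals use `n - 1` in place of `n`: if `ν_i > 0` only the derivative term
survives and `ν_i · (ν_i - 1)! = ν_i!`, while if `ν_i = 0` only the restriction survives and the
moment is unchanged. By linearity this holds for every `f`, and pairing it with `x` gives
`(∑ x_i) ∫'_I f = 0`.
-/

/-- The linear functional `∫_I` on `K[t_i : i ∈ I]` determined on monomials by
`∫_I ∏ t_i^{ν_i} = (∏ ν_i!) / (n + ∑ ν_i)!`. -/
noncomputable def simplexIntegral (K : Type*) [Field K] [CharZero K] {I : Type*}
    [Fintype I] (n : ℕ) (f : MvPolynomial I K) : K :=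
  ∑ ν ∈ f.support, f.coeff ν *
    (((∏ i, Nat.factorial (ν i) : ℕ) : K) /
      ((Nat.factorial (n + ∑ i, ν i) : ℕ) : K))

/-- Substituting `t_i = 0` in `f`, viewed as a polynomial in the variables `I \ {i}`. -/
noncomputable def restrictAway {K : Type*} [CommSemiring K] {I : Type*} [DecidableEq I]
    (i : I) (f : MvPolynomial I K) : MvPolynomial {j : I // j ≠ i} K :=
  MvPolynomial.aeval (fun j : I => if h : j = i then 0 else MvPolynomial.X ⟨j, h⟩) f

open MvPolynomial Finset
open scoped Nat

section Restrict

variable {K : Type*} {I : Type*} [CommSemiring K] [DecidableEq I]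

theorem restrictAway_eq_killCompl (i : I) (f : MvPolynomial I K) :
    restrictAway i f = killCompl (Subtype.val_injective (p := (· ≠ i))) f := by
  rw [restrictAway, killCompl]
  congr 2
  funext j
  by_cases h : j = i
  · simp [h]
  · have hj : j ∈ Set.range (Subtype.val : {j // j ≠ i} → I) := ⟨⟨j, h⟩, rfl⟩
    simp only [dif_neg h, dif_pos hj]
    exact congrArg X (Equiv.ofInjective_symm_apply Subtype.val_injective ⟨j, h⟩).symm

theorem restrictAway_monomial_of_ne_zero {i : I} {ν : I →₀ ℕ} (h : ν i ≠ 0) (c : K) :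
    restrictAway i (monomial ν c) = 0 := by
  rw [restrictAway_eq_killCompl]
  exact killCompl_monomial_eq_zero_of_notMem_range _ c (Finsupp.mem_support_iff.2 h) (by simp)

theorem restrictAway_monomial_of_eq_zero {i : I} {ν : I →₀ ℕ} (h : ν i = 0) (c : K) :
    restrictAway i (monomial ν c) =
      monomial (ν.comapDomain Subtype.val Subtype.val_injective.injOn) c := by
  rw [restrictAway_eq_killCompl]
  refine killCompl_monomial_eq_monomial_comapDomain_of_subset _ c fun j hj => ?_
  exact ⟨⟨j, by rintro rfl; exact Finsupp.mem_support_iff.1 hj h⟩, rfl⟩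

end Restrict

section Integral

variable {K : Type*} {I : Type*} [Fintype I]

noncomputable def simplexMoment (K : Type*) [Field K] (n : ℕ) (ν : I →₀ ℕ) : K :=
  ((∏ i, (ν i)! : ℕ) : K) / ((n + ∑ i, ν i)! : ℕ)

section Linear

variable [Field K] [CharZero K]

theorem simplexIntegral_eq_constr (n : ℕ) (f : MvPolynomial I K) :
    simplexIntegral K n f = (basisMonomials I K).constr K (simplexMoment K n) f := by
  rw [Module.Basis.constr_apply, Finsupp.sum]
  rfl

theorem simplexIntegral_zero (n : ℕ) : simplexIntegral K n (0 : MvPolynomial I K) = 0 := by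
  rw [simplexIntegral_eq_constr, map_zero]

theorem simplexIntegral_add (n : ℕ) (f g : MvPolynomial I K) :
    simplexIntegral K n (f + g) = simplexIntegral K n f + simplexIntegral K n g := by
  simp only [simplexIntegral_eq_constr, map_add]

theorem simplexIntegral_sum {α : Type*} (n : ℕ) (s : Finset α) (f : α → MvPolynomial I K) :
    simplexIntegral K n (∑ a ∈ s, f a) = ∑ a ∈ s, simplexIntegral K n (f a) := by
  simp only [simplexIntegral_eq_constr, map_sum]

theorem simplexIntegral_C_mul (n : ℕ) (c : K) (f : MvPolynomial I K) :
    simplexIntegral K n (C c * f) = c * simplexIntegral K n f := by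
  simp only [simplexIntegral_eq_constr, C_mul', map_smul, smul_eq_mul]

theorem simplexIntegral_monomial (n : ℕ) (ν : I →₀ ℕ) (c : K) :
    simplexIntegral K n (monomial ν c) = c * simplexMoment K n ν := by
  have hν : monomial ν c = c • basisMonomials I K ν := by simp [smul_monomial]
  rw [simplexIntegral_eq_constr, hν, map_smul, Module.Basis.constr_basis, smul_eq_mul]

end Linear

section Moment

variable [Field K] [DecidableEq I]

theorem simplexMoment_comapDomain_subtype_ne {i : I} {ν : I →₀ ℕ} (h : ν i = 0) (n : ℕ) :
    simplexMoment K n (ν.comapDomain Subtype.val Subtype.val_injective.injOn :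
      {j // j ≠ i} →₀ ℕ) = simplexMoment K n ν := by
  simp only [simplexMoment, Finsupp.comapDomain_apply, Fintype.prod_eq_mul_prod_subtype_ne _ i,
    Fintype.sum_eq_add_sum_subtype_ne _ i, h, Nat.factorial_zero, one_mul, zero_add]

theorem simplexMoment_add_single (n : ℕ) (ν : I →₀ ℕ) (i : I) :
    simplexMoment K n (ν + Finsupp.single i 1) = (ν i + 1) * simplexMoment K (n + 1) ν := by
  have hprod : ∏ j, ((ν + Finsupp.single i 1 : I →₀ ℕ) j)! = (ν i + 1) * ∏ j, (ν j)! := by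
    have hoff (j : {j // j ≠ i}) : Finsupp.single i 1 (j : I) = 0 := Finsupp.single_eq_of_ne j.2
    rw [Fintype.prod_eq_mul_prod_subtype_ne _ i, Fintype.prod_eq_mul_prod_subtype_ne _ i]
    simp only [Finsupp.add_apply, hoff, add_zero, Finsupp.single_eq_same, Nat.factorial_succ,
      mul_assoc]
  have hsum : n + ∑ j, (ν + Finsupp.single i 1 : I →₀ ℕ) j = n + 1 + ∑ j, ν j := by
    simp only [Finsupp.coe_add, Pi.add_apply, sum_add_distrib, Finsupp.univ_sum_single_apply]
    ring
  rw [simplexMoment, simplexMoment, hprod, hsum]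
  push_cast
  ring

end Moment

theorem simplexIntegral_pderiv_add_restrictAway [Field K] [CharZero K] [DecidableEq I] (m : ℕ)
    (i : I) (f : MvPolynomial I K) :
    simplexIntegral K (m + 1) (pderiv i f) + simplexIntegral K m (restrictAway i f) =
      simplexIntegral K m f := by
  induction f using MvPolynomial.induction_on' with
  | add p q hp hq =>
    simp only [restrictAway_eq_killCompl, map_add, simplexIntegral_add] at hp hq ⊢
    linear_combination hp + hq
  | monomial ν c =>
    rcases Nat.eq_zero_or_pos (ν i) with h | h
    · rw [pderiv_monomial, restrictAway_monomial_of_eq_zero h, simplexIntegral_monomial,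
        simplexIntegral_monomial, simplexIntegral_monomial,
        simplexMoment_comapDomain_subtype_ne h, h]
      simp
    · obtain ⟨μ, rfl⟩ : ∃ μ, ν = μ + Finsupp.single i 1 :=
        ⟨ν - Finsupp.single i 1, (tsub_add_cancel_of_le (Finsupp.single_le_iff.2 h)).symm⟩
      rw [pderiv_monomial, add_tsub_cancel_right, restrictAway_monomial_of_ne_zero h.ne',
        simplexIntegral_zero, simplexIntegral_monomial, simplexIntegral_monomial,
        simplexMoment_add_single]
      simp only [Finsupp.add_apply, Finsupp.single_eq_same]
      push_cast
      ring

end Integral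

theorem simplexIntegral_stokes_general (K : Type*) [Field K] [CharZero K]
    (I : Type*) [Fintype I] [DecidableEq I] (n : ℕ) (hn : 1 ≤ n)
    (x : I → K) (hx : ∑ i, x i = 0)
    (f : MvPolynomial I K) :
    simplexIntegral K n (∑ i, MvPolynomial.C (x i) * MvPolynomial.pderiv i f) +
      ∑ i, x i * simplexIntegral K (n - 1) (restrictAway i f) = 0 := by
  obtain ⟨m, rfl⟩ := Nat.exists_eq_add_of_le' hn
  simp only [simplexIntegral_sum, simplexIntegral_C_mul, Nat.add_sub_cancel, ← sum_add_distrib,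
    ← mul_add, simplexIntegral_pderiv_add_restrictAway, ← sum_mul, hx, zero_mul]

/-- Stokes-type identity: for `∑ x_i = 0`,
`∫_I ∑ x_i ∂f/∂t_i + ∑ x_i ∫_{I∖{i}} f|_{t_i = 0} = 0`. -/
theorem simplexIntegral_stokes (K : Type*) [Field K] [CharZero K]
    (I : Type*) [Fintype I] [DecidableEq I] (n : ℕ) (hn : 1 ≤ n)
    (hcard : Fintype.card I = n + 1) (x : I → K) (hx : ∑ i, x i = 0)
    (f : MvPolynomial I K) :
    simplexIntegral K n (∑ i, MvPolynomial.C (x i) * MvPolynomial.pderiv i f) +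
      ∑ i, x i * simplexIntegral K (n - 1) (restrictAway i f) = 0 :=
  simplexIntegral_stokes_general K I n hn x hx f
end

section
/- Let K be a field of characteristic zero and σ : I → J a surjective map of finite nonempty sets. Let σ* : K[t_j : j∈J] → K[t_i : i∈I] be the K-algebra map with σ*(t_j) = ∑_{σ(i)=j} t_i, and let σ_* : K[t_i : i∈I] → K[t_j : j∈J] be the K-linear map with σ_*(t^{[ν]}) = t^{[σ_*(ν+1)−1]} on the divided monomial basis. Then for all f ∈ K[t_i : i∈I] and g ∈ K[t_j : j∈J], ∫_I f·σ*(g) = ∫_J σ_*(f)·g. -/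
/-- The `K`-algebra map `σ* : K[t_j : j ∈ J] → K[t_i : i ∈ I]`, `σ*(t_j) = ∑_{σ i = j} t_i`. -/
noncomputable def sigmaUpper (K : Type*) [CommSemiring K] {I J : Type*} [Fintype I]
    (σ : I → J) [DecidableEq J] :
    MvPolynomial J K →ₐ[K] MvPolynomial I K :=
  MvPolynomial.aeval fun j =>
    ∑ i ∈ Finset.univ.filter fun i => σ i = j, MvPolynomial.X i

/-- For `σ : I → J` and a multi-index `ν : I → ℕ`, the multi-index `σ_*(ν + 1) - 1`. -/
noncomputable def pushExp {I J : Type*} [Fintype I] [DecidableEq J] [Finite J]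
    (σ : I → J) (ν : I →₀ ℕ) : J →₀ ℕ :=
  Finsupp.equivFunOnFinite.symm fun j =>
    (∑ i ∈ Finset.univ.filter fun i => σ i = j, (ν i + 1)) - 1

/-- The `K`-linear map `σ_*` defined on the divided monomial basis by
`σ_*(t^{[ν]}) = t^{[σ_*(ν+1)−1]}`. -/
noncomputable def sigmaLower (K : Type*) [Field K] [CharZero K] {I J : Type*}
    [Fintype I] [Fintype J] [DecidableEq J] (σ : I → J)
    (f : MvPolynomial I K) : MvPolynomial J K :=
  ∑ ν ∈ f.support,
    (f.coeff ν * (((∏ i, Nat.factorial (ν i) : ℕ) : K) /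
        ((∏ j, Nat.factorial (pushExp σ ν j) : ℕ) : K))) •
      MvPolynomial.monomial (pushExp σ ν) (1 : K)

/-!
Both sides are linear in `f`, and in characteristic zero the divided monomials `t^{[ν]}` form a
basis, so two identities on them suffice. First, `σ_*` satisfies the projection formula
`σ_*(f · σ*(g)) = σ_*(f) · g`; by induction on `g` it reduces to `g = t_j`, where
`t^{[ν]} t_i = (ν_i + 1) t^{[ν + e_i]}` and the sum of `ν_i + 1` over the fibre of `j` is exactly
`σ_*(ν + 1)_j`. Second, `∫_J ∘ σ_* = ∫_I`, because `|σ_*(ν + 1) - 1| + |J| = |ν| + |I|` leaves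
the factorial `(n + |ν|)!` unchanged.
-/

open Finset MvPolynomial Nat

lemma Finsupp.prod_factorial_add_single {A : Type*} [Fintype A] [DecidableEq A]
    (μ : A →₀ ℕ) (a : A) :
    ∏ x, ((μ + Finsupp.single a 1 : A →₀ ℕ) x)! = (μ a + 1) * ∏ x, (μ x)! := by
  have hfactor : ∀ x, ((μ + Finsupp.single a 1 : A →₀ ℕ) x)! =
      (if a = x then μ a + 1 else 1) * (μ x)! := by
    intro x
    by_cases h : a = x
    · subst h; simp [Nat.factorial_succ]
    · simp [h]
  rw [Finset.prod_congr rfl fun x _ => hfactor x, Finset.prod_mul_distrib, Fintype.prod_ite_eq]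

section pushExp

variable {I J : Type*} [Fintype I] [Fintype J] [DecidableEq J]

lemma pushExp_add_one_of_mem_range {σ : I → J} {j : J} (hj : j ∈ Set.range σ) (ν : I →₀ ℕ) :
    pushExp σ ν j + 1 = ∑ i ∈ univ.filter (σ · = j), (ν i + 1) := by
  obtain ⟨i, hi⟩ := hj
  have := single_le_sum (f := fun i => ν i + 1) (fun _ _ => Nat.zero_le _)
    (mem_filter.2 ⟨mem_univ i, hi⟩ : i ∈ univ.filter (σ · = j))
  simp only [pushExp, Finsupp.coe_equivFunOnFinite_symm]
  omega

lemma pushExp_add_single (σ : I → J) (ν : I →₀ ℕ) (i : I) :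
    pushExp σ (ν + Finsupp.single i 1) = pushExp σ ν + Finsupp.single (σ i) 1 := by
  ext j
  have hfibre : ∑ k ∈ univ.filter (σ · = j), (ν k + Finsupp.single i 1 k + 1) =
      ∑ k ∈ univ.filter (σ · = j), (ν k + 1) + if σ i = j then 1 else 0 := by
    classical
    simp only [Finsupp.single_apply, sum_add_distrib, sum_ite_eq, mem_filter, mem_univ,
      true_and, sum_const, smul_eq_mul, mul_one]
    omega
  by_cases h : σ i = j
  · have hj : j ∈ Set.range σ := ⟨i, h⟩
    have := pushExp_add_one_of_mem_range hj (ν + Finsupp.single i 1)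
    have := pushExp_add_one_of_mem_range hj ν
    simp only [Finsupp.add_apply, Finsupp.single_apply, h, if_true] at *
    omega
  · simp only [pushExp, Finsupp.coe_equivFunOnFinite_symm, Finsupp.add_apply, hfibre,
      Finsupp.single_apply, h, if_false, add_zero]

lemma sum_pushExp_add_card {σ : I → J} (hσ : Function.Surjective σ) (ν : I →₀ ℕ) :
    ∑ j, pushExp σ ν j + Fintype.card J = ∑ i, ν i + Fintype.card I := by
  have h : ∑ j, (pushExp σ ν j + 1) = ∑ i, (ν i + 1) := by
    simp only [pushExp_add_one_of_mem_range (hσ.range_eq ▸ Set.mem_univ _)]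
    exact Finset.sum_fiberwise univ σ _
  simpa [sum_add_distrib] using h

lemma card_sub_one_add_sum_pushExp {σ : I → J} (hσ : Function.Surjective σ) (ν : I →₀ ℕ) :
    Fintype.card J - 1 + ∑ j, pushExp σ ν j = Fintype.card I - 1 + ∑ i, ν i := by
  have h := sum_pushExp_add_card hσ ν
  rcases isEmpty_or_nonempty I with hI | hI
  · have := hσ.isEmpty
    simp_all
  · obtain ⟨i⟩ := hI
    have : 0 < Fintype.card J := Fintype.card_pos_iff.2 ⟨σ i⟩
    have : 0 < Fintype.card I := Fintype.card_pos_iff.2 ⟨i⟩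
    omega

end pushExp

lemma sigmaUpper_X {K : Type*} [CommSemiring K] {I J : Type*} [Fintype I] [DecidableEq J]
    (σ : I → J) (j : J) :
    sigmaUpper K σ (X j) = ∑ i ∈ univ.filter (σ · = j), X i :=
  aeval_X _ _

section dividedMonomial

variable {K : Type*} [Field K] {I : Type*} [Fintype I]

variable (K) in
noncomputable def dividedMonomial (ν : I →₀ ℕ) : MvPolynomial I K :=
  monomial ν ((∏ i, (ν i)! : ℕ) : K)⁻¹

lemma dividedMonomial_eq_inv_smul (ν : I →₀ ℕ) :
    dividedMonomial K ν = ((∏ i, (ν i)! : ℕ) : K)⁻¹ • monomial ν 1 := by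
  rw [dividedMonomial, smul_monomial, smul_eq_mul, mul_one]

variable [CharZero K]

lemma cast_prod_factorial_ne_zero {A : Type*} [Fintype A] (ν : A →₀ ℕ) :
    ((∏ a, (ν a)! : ℕ) : K) ≠ 0 :=
  Nat.cast_ne_zero.2 (prod_ne_zero_iff.2 fun _ _ => factorial_ne_zero _)

lemma monomial_one_eq_smul_dividedMonomial (ν : I →₀ ℕ) :
    monomial ν (1 : K) = ((∏ i, (ν i)! : ℕ) : K) • dividedMonomial K ν := by
  rw [dividedMonomial_eq_inv_smul, smul_smul, mul_inv_cancel₀ (cast_prod_factorial_ne_zero ν),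
    one_smul]

lemma dividedMonomial_mul_X [DecidableEq I] (ν : I →₀ ℕ) (i : I) :
    dividedMonomial K ν * X i =
      ((ν i + 1 : ℕ) : K) • dividedMonomial K (ν + Finsupp.single i 1) := by
  rw [dividedMonomial, dividedMonomial, X, monomial_mul, smul_monomial,
    Finsupp.prod_factorial_add_single]
  congr 1
  have := cast_prod_factorial_ne_zero (K := K) ν
  push_cast
  rw [smul_eq_mul]
  field_simp

lemma linearMap_ext_dividedMonomial {M : Type*} [AddCommMonoid M] [Module K M]
    {Φ Ψ : MvPolynomial I K →ₗ[K] M}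
    (h : ∀ ν, Φ (dividedMonomial K ν) = Ψ (dividedMonomial K ν)) : Φ = Ψ :=
  (basisMonomials I K).ext fun ν => by
    simp only [coe_basisMonomials, monomial_one_eq_smul_dividedMonomial, map_smul, h]

end dividedMonomial

section linearMaps

variable {K : Type*} [Field K] {I J : Type*} [Fintype I] [Fintype J] [DecidableEq J]

variable (K) in
noncomputable def simplexIntegralₗ (n : ℕ) : MvPolynomial I K →ₗ[K] K :=
  (basisMonomials I K).constr K fun ν => ((∏ i, (ν i)! : ℕ) : K) / ((n + ∑ i, ν i)! : ℕ)

variable (K) in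
noncomputable def sigmaLowerₗ (σ : I → J) : MvPolynomial I K →ₗ[K] MvPolynomial J K :=
  (basisMonomials I K).constr K fun ν =>
    (((∏ i, (ν i)! : ℕ) : K) / ((∏ j, (pushExp σ ν j)! : ℕ) : K)) •
      monomial (pushExp σ ν) (1 : K)

variable [CharZero K]

lemma simplexIntegralₗ_apply (n : ℕ) (f : MvPolynomial I K) :
    simplexIntegralₗ K n f = simplexIntegral K n f := by
  rw [simplexIntegralₗ, Module.Basis.constr_apply, simplexIntegral, Finsupp.sum]
  rfl

lemma sigmaLowerₗ_apply (σ : I → J) (f : MvPolynomial I K) :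
    sigmaLowerₗ K σ f = sigmaLower K σ f := by
  rw [sigmaLowerₗ, Module.Basis.constr_apply, sigmaLower, Finsupp.sum]
  exact sum_congr rfl fun ν _ => smul_smul _ _ _

lemma simplexIntegralₗ_dividedMonomial (n : ℕ) (ν : I →₀ ℕ) :
    simplexIntegralₗ K n (dividedMonomial K ν) = ((n + ∑ i, ν i)! : K)⁻¹ := by
  have h := (basisMonomials I K).constr_basis K
    (fun ν => ((∏ i, (ν i)! : ℕ) : K) / ((n + ∑ i, ν i)! : ℕ)) ν
  rw [coe_basisMonomials] at h
  rw [dividedMonomial_eq_inv_smul, map_smul, simplexIntegralₗ, h, smul_eq_mul,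
    ← mul_div_assoc, inv_mul_cancel₀ (cast_prod_factorial_ne_zero ν), one_div]

lemma sigmaLowerₗ_dividedMonomial (σ : I → J) (ν : I →₀ ℕ) :
    sigmaLowerₗ K σ (dividedMonomial K ν) = dividedMonomial K (pushExp σ ν) := by
  have h := (basisMonomials I K).constr_basis K (fun ν =>
    (((∏ i, (ν i)! : ℕ) : K) / ((∏ j, (pushExp σ ν j)! : ℕ) : K)) •
      monomial (pushExp σ ν) (1 : K)) ν
  rw [coe_basisMonomials] at h
  rw [dividedMonomial_eq_inv_smul, map_smul, sigmaLowerₗ, h, smul_smul,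
    ← mul_div_assoc, inv_mul_cancel₀ (cast_prod_factorial_ne_zero ν), one_div,
    dividedMonomial_eq_inv_smul]

lemma sigmaLowerₗ_dividedMonomial_mul_sigmaUpper_X [DecidableEq I] {σ : I → J}
    (hσ : Function.Surjective σ) (ν : I →₀ ℕ) (j : J) :
    sigmaLowerₗ K σ (dividedMonomial K ν * sigmaUpper K σ (X j)) =
      sigmaLowerₗ K σ (dividedMonomial K ν) * X j := by
  calc sigmaLowerₗ K σ (dividedMonomial K ν * sigmaUpper K σ (X j))
      = ∑ i ∈ univ.filter (σ · = j),
          ((ν i + 1 : ℕ) : K) • dividedMonomial K (pushExp σ ν + Finsupp.single j 1) := by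
        rw [sigmaUpper_X, mul_sum, map_sum]
        refine sum_congr rfl fun i hi => ?_
        rw [dividedMonomial_mul_X, map_smul, sigmaLowerₗ_dividedMonomial, pushExp_add_single,
          (mem_filter.1 hi).2]
    _ = ((pushExp σ ν j + 1 : ℕ) : K) •
          dividedMonomial K (pushExp σ ν + Finsupp.single j 1) := by
        rw [← sum_smul, pushExp_add_one_of_mem_range (hσ.range_eq ▸ Set.mem_univ j),
          Nat.cast_sum]
    _ = sigmaLowerₗ K σ (dividedMonomial K ν) * X j := by
        rw [sigmaLowerₗ_dividedMonomial, dividedMonomial_mul_X]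

lemma sigmaLowerₗ_mul_sigmaUpper_X {σ : I → J} (hσ : Function.Surjective σ)
    (f : MvPolynomial I K) (j : J) :
    sigmaLowerₗ K σ (f * sigmaUpper K σ (X j)) = sigmaLowerₗ K σ f * X j := by
  classical
  have h : sigmaLowerₗ K σ ∘ₗ LinearMap.mulRight K (sigmaUpper K σ (X j)) =
      LinearMap.mulRight K (X j) ∘ₗ sigmaLowerₗ K σ :=
    linearMap_ext_dividedMonomial fun ν =>
      sigmaLowerₗ_dividedMonomial_mul_sigmaUpper_X hσ ν j
  exact LinearMap.congr_fun h f

lemma sigmaLowerₗ_mul_sigmaUpper {σ : I → J} (hσ : Function.Surjective σ)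
    (f : MvPolynomial I K) (g : MvPolynomial J K) :
    sigmaLowerₗ K σ (f * sigmaUpper K σ g) = sigmaLowerₗ K σ f * g := by
  induction g using MvPolynomial.induction_on generalizing f with
  | C a => rw [sigmaUpper, aeval_C, algebraMap_eq, mul_comm, C_mul', map_smul, mul_comm, C_mul']
  | add p q hp hq => rw [map_add, mul_add, map_add, hp, hq, mul_add]
  | mul_X p j hp =>
    rw [_root_.map_mul (sigmaUpper K σ), ← mul_assoc, sigmaLowerₗ_mul_sigmaUpper_X hσ, hp, mul_assoc]

lemma simplexIntegralₗ_sigmaLowerₗ {σ : I → J} (hσ : Function.Surjective σ)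
    (f : MvPolynomial I K) :
    simplexIntegralₗ K (Fintype.card J - 1) (sigmaLowerₗ K σ f) =
      simplexIntegralₗ K (Fintype.card I - 1) f := by
  have h : simplexIntegralₗ K (Fintype.card J - 1) ∘ₗ sigmaLowerₗ K σ =
      simplexIntegralₗ K (Fintype.card I - 1) :=
    linearMap_ext_dividedMonomial fun ν => by
      rw [LinearMap.comp_apply, sigmaLowerₗ_dividedMonomial, simplexIntegralₗ_dividedMonomial,
        simplexIntegralₗ_dividedMonomial, card_sub_one_add_sum_pushExp hσ]
  exact LinearMap.congr_fun h f

end linearMaps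

theorem simplexIntegral_sigmaLower_adjoint_general (K : Type*) [Field K] [CharZero K]
    (I J : Type*) [Fintype I] [Fintype J] [DecidableEq J]
    (σ : I → J) (hσ : Function.Surjective σ)
    (f : MvPolynomial I K) (g : MvPolynomial J K) :
    simplexIntegral K (Fintype.card I - 1) (f * sigmaUpper K σ g) =
      simplexIntegral K (Fintype.card J - 1) (sigmaLower K σ f * g) := by
  rw [← simplexIntegralₗ_apply, ← simplexIntegralₗ_apply, ← sigmaLowerₗ_apply,
    ← sigmaLowerₗ_mul_sigmaUpper hσ, simplexIntegralₗ_sigmaLowerₗ hσ]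

/-- Adjunction formula: `∫_I f · σ*(g) = ∫_J σ_*(f) · g`. -/
theorem simplexIntegral_sigmaLower_adjoint (K : Type*) [Field K] [CharZero K]
    (I J : Type*) [Fintype I] [Fintype J] [DecidableEq J] [Nonempty I] [Nonempty J]
    (σ : I → J) (hσ : Function.Surjective σ)
    (f : MvPolynomial I K) (g : MvPolynomial J K) :
    simplexIntegral K (Fintype.card I - 1) (f * sigmaUpper K σ g) =
      simplexIntegral K (Fintype.card J - 1) (sigmaLower K σ f * g) :=
  simplexIntegral_sigmaLower_adjoint_general K I J σ hσ f g
end
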